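/- Any multiplicative polynomial map on a finite-dimensional algebra R over an infinite field F factors through R/J, where J is the Jacobson radical: a multiplicative polynomial map f satisfies f(a + j) = f(a) for all a ∈ R, j ∈ J (equivalently, the characters of R* coincide with the polynomial characters of (R/J)*). -/

import Mathlib

/-!
Elements of the Jacobson radical of a finite-dimensional algebra are nilpotent. For nilpotent `n`,
`t ↦ f (1 + t • n)` is a polynomial, and so is `t ↦ f ((1 + t • n)⁻¹)`, since the inverse is the
finite geometric series in `-t • n`; as `F` is infinite their product is the constant polynomial
`f 1`, so (unless `f ≡ 0`) the first one is a unit of `F[X]`, hence constant, and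
`f (1 + n) = f 1`. Writing `x + j = x * (1 + x⁻¹ * j)` gives `f (x + j) = f x` for units `x`.
For arbitrary `a`, both sides are polynomial along the line `a - t • 1`, which consists of units
off the finite spectrum of `a`; a polynomial with infinitely many roots vanishes.
-/

open TensorProduct

variable {F R ι : Type*}

/-- The polynomial function on `R` attached to a polynomial in the coordinates
along the basis `b`. -/
noncomputable def polyFun [Field F] [Ring R] [Algebra F R] [Fintype ι]
    (b : Module.Basis ι F R) (p : MvPolynomial ι F) : R → F :=
  fun r => MvPolynomial.eval (fun i => b.repr r i) p

/-- The abstract characteristic polynomial `χ_a(t) = N(t·1 - a)` of an element `a`,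
for the polynomial map attached to `p`. -/
noncomputable def charPolyOf [Field F] [Ring R] [Algebra F R] [Fintype ι]
    (b : Module.Basis ι F R) (p : MvPolynomial ι F) (a : R) : Polynomial F :=
  MvPolynomial.aeval
    (fun i => Polynomial.C (b.repr 1 i) * Polynomial.X - Polynomial.C (b.repr a i)) p

/-- `p` defines a Cayley–Hamilton norm of degree `n` on `R` (w.r.t. the basis `b`):
homogeneous of degree `n`, multiplicative, and every element satisfies its abstract
characteristic polynomial. -/
structure IsCHNorm [Field F] [Ring R] [Algebra F R] [Fintype ι]
    (b : Module.Basis ι F R) (n : ℕ) (p : MvPolynomial ι F) : Prop where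
  homog : ∀ (α : F) (r : R), polyFun b p (α • r) = α ^ n * polyFun b p r
  mult : ∀ x y : R, polyFun b p (x * y) = polyFun b p x * polyFun b p y
  ch : ∀ a : R, Polynomial.aeval a (charPolyOf b p a) = 0

/-- The generic element `x = Σ xᵢ aᵢ` of `R ⊗ K`, `K` the rational function field. -/
noncomputable def genElt [Field F] [Ring R] [Algebra F R] [Fintype ι] (b : Module.Basis ι F R) :
    FractionRing (MvPolynomial ι F) ⊗[F] R :=
  ∑ i, algebraMap (MvPolynomial ι F) (FractionRing (MvPolynomial ι F)) (MvPolynomial.X i)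
    ⊗ₜ[F] b i

open Polynomial Finset

theorem IsArtinianRing.isNilpotent_of_mem_jacobson [Ring R] [IsArtinianRing R] {j : R}
    (hj : j ∈ Ideal.jacobson (⊥ : Ideal R)) : IsNilpotent j := by
  obtain ⟨k, hk⟩ := IsArtinianRing.isNilpotent_jacobson_bot (R := R)
  exact ⟨k, by simpa [hk] using Submodule.pow_mem_pow _ hj k⟩

theorem spectrum.finite_of_finiteDimensional [Field F] [Ring R] [Algebra F R]
    [FiniteDimensional F R] (a : R) : (spectrum F a).Finite := by
  refine (Module.End.finite_spectrum (Algebra.lmul F R a)).subset fun t ht => ?_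
  rw [spectrum.mem_iff, ← Algebra.lmul_isUnit_iff (R := F), map_sub, AlgHom.commutes] at ht
  exact ht

section PolyFun

variable [Field F] [Ring R] [Algebra F R] [Fintype ι] (b : Module.Basis ι F R)
  (p : MvPolynomial ι F)

theorem eval_aeval_eq_polyFun {c : F → R} {q : ι → F[X]}
    (hq : ∀ t i, (q i).eval t = b.repr (c t) i) (t : F) :
    (MvPolynomial.aeval q p).eval t = polyFun b p (c t) := by
  rw [← coe_aeval_eq_eval, ← AlgHom.comp_apply, MvPolynomial.comp_aeval]
  simp only [coe_aeval_eq_eval, hq]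
  rfl

theorem exists_eval_eq_polyFun_add_smul (x y : R) :
    ∃ Q : F[X], ∀ t, Q.eval t = polyFun b p (x + t • y) :=
  ⟨_, eval_aeval_eq_polyFun b p (q := fun i => C (b.repr x i) + C (b.repr y i) * X)
    fun t i => by simp [mul_comm t]⟩

theorem exists_eval_eq_polyFun_sum_pow_smul (v : ℕ → R) (m : ℕ) :
    ∃ Q : F[X], ∀ t, Q.eval t = polyFun b p (∑ k ∈ range m, t ^ k • v k) :=
  ⟨_, eval_aeval_eq_polyFun b p (q := fun i => ∑ k ∈ range m, C (b.repr (v k) i) * X ^ k)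
    fun t i => by simp [eval_finsetSum, Finsupp.finsetSum_apply, mul_comm (t ^ _)]⟩

variable {b p}

theorem polyFun_one_add_of_isNilpotent [Infinite F]
    (hmul : ∀ x y : R, polyFun b p (x * y) = polyFun b p x * polyFun b p y)
    {n : R} (hn : IsNilpotent n) : polyFun b p (1 + n) = polyFun b p 1 := by
  by_cases h1 : polyFun b p 1 = 0
  · rw [h1, ← mul_one (1 + n), hmul, h1, mul_zero]
  obtain ⟨m, hm⟩ := hn
  obtain ⟨Q, hQ⟩ := exists_eval_eq_polyFun_add_smul b p 1 n
  obtain ⟨S, hS⟩ := exists_eval_eq_polyFun_sum_pow_smul b p (fun k => (-n) ^ k) m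
  have hinv (t : F) : (1 + t • n) * ∑ k ∈ range m, t ^ k • (-n) ^ k = 1 := by
    simp only [← _root_.smul_pow, smul_neg]
    rw [← sub_neg_eq_add, mul_neg_geom_sum, ← neg_smul, _root_.smul_pow, hm, smul_zero, sub_zero]
  have hQS : Q * S = C (polyFun b p 1) :=
    Polynomial.funext fun t => by rw [eval_mul, hQ, hS, ← hmul, hinv, eval_C]
  have hQC : Q = C (Q.coeff 0) := eq_C_of_natDegree_eq_zero <| natDegree_eq_zero_of_isUnit <|
    isUnit_of_mul_isUnit_left (hQS ▸ isUnit_C.mpr (Ne.isUnit h1))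
  calc polyFun b p (1 + n) = Q.eval 1 := by rw [hQ, one_smul]
    _ = Q.eval 0 := by rw [hQC, eval_C, eval_C]
    _ = polyFun b p 1 := by rw [hQ, zero_smul, add_zero]

theorem polyFun_add_of_isUnit_of_mem_jacobson [Infinite F] [FiniteDimensional F R]
    (hmul : ∀ x y : R, polyFun b p (x * y) = polyFun b p x * polyFun b p y)
    {x j : R} (hx : IsUnit x) (hj : j ∈ Ideal.jacobson (⊥ : Ideal R)) :
    polyFun b p (x + j) = polyFun b p x := by
  have : IsArtinianRing R := IsArtinianRing.of_finite F R
  obtain ⟨u, rfl⟩ := hx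
  have hnil : IsNilpotent (↑u⁻¹ * j) :=
    IsArtinianRing.isNilpotent_of_mem_jacobson (Ideal.mul_mem_left _ _ hj)
  calc polyFun b p (u + j) = polyFun b p (u * (1 + ↑u⁻¹ * j)) := by
        rw [mul_add, mul_one, Units.mul_inv_cancel_left]
    _ = polyFun b p u := by rw [hmul, polyFun_one_add_of_isNilpotent hmul hnil, ← hmul, mul_one]

end PolyFun

/-- A multiplicative polynomial map on a finite-dimensional algebra over an infinite field
factors through `R / J`, `J` the Jacobson radical: `f (a + j) = f a` for all `j ∈ J`. -/
theorem stmt15 [Field F] [Infinite F] [Ring R] [Algebra F R] [FiniteDimensional F R]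
    [Fintype ι] (b : Module.Basis ι F R) (p : MvPolynomial ι F)
    (hmul : ∀ x y : R, polyFun b p (x * y) = polyFun b p x * polyFun b p y) :
    ∀ a j : R, j ∈ Ideal.jacobson (⊥ : Ideal R) → polyFun b p (a + j) = polyFun b p a := by
  intro a j hj
  obtain ⟨Q₁, hQ₁⟩ := exists_eval_eq_polyFun_add_smul b p (a + j) (-1)
  obtain ⟨Q₂, hQ₂⟩ := exists_eval_eq_polyFun_add_smul b p a (-1)
  have hroots : (spectrum F a)ᶜ ⊆ {t | (Q₁ - Q₂).IsRoot t} := fun t ht => by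
    have hunit : IsUnit (a + t • -1) := by
      simpa [Algebra.algebraMap_eq_smul_one, sub_eq_neg_add, add_comm] using
        (spectrum.notMem_iff.mp ht).neg
    simp only [Set.mem_ofPred_eq, IsRoot.def, eval_sub, hQ₁, hQ₂, add_right_comm a j,
      polyFun_add_of_isUnit_of_mem_jacobson hmul hunit hj, sub_self]
  have hQ : Q₁ = Q₂ := sub_eq_zero.mp <| eq_zero_of_infinite_isRoot _ <|
    (spectrum.finite_of_finiteDimensional a).infinite_compl.mono hroots
  simpa [hQ₁, hQ₂] using congr_arg (eval 0) hQ
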